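/- arXiv:0802.3276 — 6 statements merged into one kernel-verified Lean document; each statement's English description precedes it below -/
import Mathlib

section
/- Let Z₁,…,Zₙ be independent standard Gaussian random variables, λ₁,…,λₙ and δ₁,…,δₙ real constants, γ² := Σᵢ λᵢ²(2 + 4δᵢ²), and λ_max := max(λ₁,…,λₙ,0). Then for every η ≥ 0, P( Σᵢ λᵢ((Zᵢ+δᵢ)² − (1+δᵢ²)) ≥ ηγ ) ≤ exp( −η²/(2 + 4η λ_max/γ) ). -/
/-!
Chernoff's method. For `s < 1/2` the moment generating function of `(Z + δ)² - (1 + δ²)` is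
`(1 - 2s)^(-1/2) exp(s δ² / (1 - 2s) - s (1 + δ²))`, and the inequality
`-log (1 - u) - u ≤ u² / (2 (1 - c))` for `u ≤ c < 1` bounds it by
`exp (s² (2 + 4δ²) / (2 (1 - c)))` whenever `2s ≤ c`. By independence the weighted sum is
therefore sub-gamma with variance factor `γ²` and scale `2 λ_max`, and the Chernoff bound at
`t = η / (γ + 2 η λ_max)` gives the tail `exp (-η² / (2 + 4 η λ_max / γ))`.
-/

open MeasureTheory ProbabilityTheory Finset Real

lemma gaussianPDFReal_mul_exp_mul_add_sq {s : ℝ} (hs : s < 1 / 2) (δ x : ℝ) :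
    gaussianPDFReal 0 1 x * exp (s * (x + δ) ^ 2)
      = (√(2 * π))⁻¹ * exp (s * δ ^ 2 / (1 - 2 * s))
        * exp (-(1 / 2 - s) * (x - s * δ / (1 / 2 - s)) ^ 2) := by
  have : 1 / 2 - s ≠ 0 := by linarith
  have : 1 - 2 * s ≠ 0 := by linarith
  simp only [gaussianPDFReal, NNReal.coe_one, mul_one, sub_zero, mul_assoc, ← exp_add]
  congr 2
  field_simp
  ring

lemma integral_exp_mul_add_sq_gaussianReal {s : ℝ} (hs : s < 1 / 2) (δ : ℝ) :
    ∫ x, exp (s * (x + δ) ^ 2) ∂gaussianReal 0 1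
      = (√(1 - 2 * s))⁻¹ * exp (s * δ ^ 2 / (1 - 2 * s)) := by
  rw [integral_gaussianReal_eq_integral_smul one_ne_zero]
  simp_rw [smul_eq_mul, gaussianPDFReal_mul_exp_mul_add_sq hs δ, integral_const_mul]
  rw [integral_sub_right_eq_self (fun x => exp (-(1 / 2 - s) * x ^ 2)), integral_gaussian]
  have h2s : 0 < 1 - 2 * s := by linarith
  have : π / (1 / 2 - s) = 2 * π / (1 - 2 * s) := by field_simp
  rw [this, sqrt_div' _ h2s.le]
  field_simp

lemma integrable_exp_mul_add_sq_gaussianReal {s : ℝ} (hs : s < 1 / 2) (δ : ℝ) :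
    Integrable (fun x => exp (s * (x + δ) ^ 2)) (gaussianReal 0 1) := by
  by_contra h
  have := integral_exp_mul_add_sq_gaussianReal hs δ
  rw [integral_undef h] at this
  have : 0 < 1 - 2 * s := by linarith
  have : 0 < (√(1 - 2 * s))⁻¹ * exp (s * δ ^ 2 / (1 - 2 * s)) := by positivity
  linarith

lemma neg_log_one_sub_sub_le {u c : ℝ} (hc0 : 0 ≤ c) (hc1 : c < 1) (huc : u ≤ c) :
    -log (1 - u) - u ≤ u ^ 2 / (2 * (1 - c)) := by
  set g : ℝ → ℝ := fun x => x ^ 2 / (2 * (1 - c)) + log (1 - x) + x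
  -- `g' x = x (c - x) / ((1 - c) (1 - x))` changes sign only at `0`, where `g` vanishes.
  have hg' : ∀ x < 1, HasDerivAt g (x * (c - x) / ((1 - c) * (1 - x))) x := by
    intro x hx
    have hlog := ((hasDerivAt_id x).const_sub 1).log (by simp; linarith)
    refine ((((hasDerivAt_pow 2 x).div_const (2 * (1 - c))).add hlog).add
      (hasDerivAt_id x)).congr_deriv ?_
    have : 1 - x ≠ 0 := by linarith
    have : 1 - c ≠ 0 := by linarith
    simp only [id]
    field_simp
    ring
  have hcont : ∀ a b, b ≤ c → ContinuousOn g (Set.Icc a b) := fun a b hb x hx =>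
    (hg' x (by linarith [hx.2])).continuousAt.continuousWithinAt
  have hg0 : g 0 = 0 := by simp [g]
  suffices 0 ≤ g u by simp only [g] at this; linarith
  rcases lt_trichotomy u 0 with hu | rfl | hu
  · obtain ⟨x, hx, hslope⟩ := exists_hasDerivAt_eq_slope g _ hu (hcont u 0 hc0)
      fun x hx => hg' x (by linarith [hx.2])
    rw [hg0, eq_div_iff (by linarith)] at hslope
    have : x * (c - x) / ((1 - c) * (1 - x)) ≤ 0 :=
      div_nonpos_of_nonpos_of_nonneg
        (mul_nonpos_of_nonpos_of_nonneg hx.2.le (by linarith [hx.2]))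
        (mul_nonneg (by linarith) (by linarith [hx.2]))
    nlinarith
  · exact hg0.ge
  · obtain ⟨x, hx, hslope⟩ := exists_hasDerivAt_eq_slope g _ hu (hcont 0 u huc)
      fun x hx => hg' x (by linarith [hx.2])
    rw [hg0, eq_div_iff (by linarith)] at hslope
    have : 0 ≤ x * (c - x) / ((1 - c) * (1 - x)) :=
      div_nonneg (mul_nonneg hx.1.le (by linarith [hx.2]))
        (mul_nonneg (by linarith) (by linarith [hx.2]))
    nlinarith

lemma integrable_exp_mul_add_sq_sub_gaussianReal {s : ℝ} (hs : s < 1 / 2) (δ : ℝ) :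
    Integrable (fun x => exp (s * ((x + δ) ^ 2 - (1 + δ ^ 2)))) (gaussianReal 0 1) := by
  simp_rw [mul_sub, sub_eq_add_neg, exp_add]
  exact (integrable_exp_mul_add_sq_gaussianReal hs δ).mul_const _

lemma mgf_add_sq_sub_gaussianReal_le {s c δ : ℝ} (hc0 : 0 ≤ c) (hc1 : c < 1) (hsc : 2 * s ≤ c) :
    mgf (fun x => (x + δ) ^ 2 - (1 + δ ^ 2)) (gaussianReal 0 1) s
      ≤ exp (s ^ 2 * (2 + 4 * δ ^ 2) / (2 * (1 - c))) := by
  have h2s : 0 < 1 - 2 * s := by linarith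
  have hlog := neg_log_one_sub_sub_le hc0 hc1 hsc
  have hδ : s * δ ^ 2 / (1 - 2 * s) - s * δ ^ 2 ≤ 2 * s ^ 2 * δ ^ 2 / (1 - c) := by
    calc s * δ ^ 2 / (1 - 2 * s) - s * δ ^ 2 = 2 * s ^ 2 * δ ^ 2 / (1 - 2 * s) := by
          rw [eq_div_iff h2s.ne', sub_mul, div_mul_cancel₀ _ h2s.ne']
          ring
      _ ≤ 2 * s ^ 2 * δ ^ 2 / (1 - c) := by gcongr
  have hsqrt : (√(1 - 2 * s))⁻¹ = exp (-log (1 - 2 * s) / 2) := by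
    rw [sqrt_eq_rpow, ← rpow_neg h2s.le, rpow_def_of_pos h2s]
    ring_nf
  have hmgf : mgf (fun x => (x + δ) ^ 2 - (1 + δ ^ 2)) (gaussianReal 0 1) s
      = exp (-log (1 - 2 * s) / 2 + s * δ ^ 2 / (1 - 2 * s) - s * (1 + δ ^ 2)) := by
    simp_rw [mgf, mul_sub, exp_sub, integral_div]
    rw [integral_exp_mul_add_sq_gaussianReal (by linarith), hsqrt, ← exp_add, ← exp_sub]
  rw [hmgf, exp_le_exp]
  have : s ^ 2 * (2 + 4 * δ ^ 2) / (2 * (1 - c)) = (2 * s) ^ 2 / (2 * (1 - c)) / 2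
      + 2 * s ^ 2 * δ ^ 2 / (1 - c) := by
    have : 1 - c ≠ 0 := by linarith
    field_simp; ring
  linarith

section Pi

variable {ι : Type*} [Fintype ι] {E : ι → Type*} [∀ i, MeasurableSpace (E i)]
  {μ : (i : ι) → Measure (E i)} [∀ i, SigmaFinite (μ i)]

lemma mgf_pi_sum (f : (i : ι) → E i → ℝ) (t : ℝ) :
    mgf (fun x => ∑ i, f i (x i)) (Measure.pi μ) t = ∏ i, mgf (f i) (μ i) t := by
  simp_rw [mgf, mul_sum, exp_sum]
  exact integral_fintype_prod_eq_prod (fun i y => exp (t * f i y))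

lemma integrable_exp_mul_pi_sum {f : (i : ι) → E i → ℝ} {t : ℝ}
    (hf : ∀ i, Integrable (fun y => exp (t * f i y)) (μ i)) :
    Integrable (fun x => exp (t * ∑ i, f i (x i))) (Measure.pi μ) := by
  simp_rw [mul_sum, exp_sum]
  exact Integrable.fintype_prod_dep hf

end Pi

lemma measureReal_ge_le_of_mgf_le_subGamma {Ω : Type*} [MeasurableSpace Ω] {μ : Measure Ω}
    [IsFiniteMeasure μ] {X : Ω → ℝ} {γ b η : ℝ} (hγ : 0 < γ) (hb : 0 ≤ b) (hη : 0 ≤ η)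
    (hX : ∀ t, 0 ≤ t → b * t < 1 → Integrable (fun ω => exp (t * X ω)) μ ∧
      mgf X μ t ≤ exp (t ^ 2 * γ ^ 2 / (2 * (1 - b * t)))) :
    μ.real {ω | η * γ ≤ X ω} ≤ exp (-(η ^ 2 / (2 + 2 * b * η / γ))) := by
  have hD : 0 < γ + b * η := by positivity
  set t := η / (γ + b * η) with ht_def
  have ht : 0 ≤ t := by positivity
  have hbt : 1 - b * t = γ / (γ + b * η) := by
    rw [ht_def]
    field_simp
    ring
  obtain ⟨hint, hmgf⟩ := hX t ht (by linarith [show 0 < γ / (γ + b * η) by positivity])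
  calc μ.real {ω | η * γ ≤ X ω} ≤ exp (-t * (η * γ)) * mgf X μ t :=
        measure_ge_le_exp_mul_mgf _ ht hint
    _ ≤ exp (-t * (η * γ)) * exp (t ^ 2 * γ ^ 2 / (2 * (1 - b * t))) := by gcongr
    _ = exp (-(η ^ 2 / (2 + 2 * b * η / γ))) := by
        rw [← exp_add, hbt, ht_def]
        congr 1
        field_simp
        ring

section WeightedSum

variable {ι : Type*} [Fintype ι] (lam δ : ι → ℝ) {t : ℝ}

lemma integrable_exp_mul_weighted_sq_sub (h : ∀ i, lam i * t < 1 / 2) :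
    Integrable (fun x => exp (t * ∑ i, lam i * ((x i + δ i) ^ 2 - (1 + δ i ^ 2))))
      (Measure.pi fun _ : ι => gaussianReal 0 1) := by
  refine integrable_exp_mul_pi_sum
    (f := fun i y => lam i * ((y + δ i) ^ 2 - (1 + δ i ^ 2))) fun i => ?_
  simp_rw [← mul_assoc, mul_comm t (lam i)]
  exact integrable_exp_mul_add_sq_sub_gaussianReal (h i) (δ i)

lemma mgf_weighted_sq_sub_le {c : ℝ} (hc0 : 0 ≤ c) (hc1 : c < 1)
    (h : ∀ i, 2 * (lam i * t) ≤ c) :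
    mgf (fun x => ∑ i, lam i * ((x i + δ i) ^ 2 - (1 + δ i ^ 2)))
        (Measure.pi fun _ : ι => gaussianReal 0 1) t
      ≤ exp (t ^ 2 * (∑ i, lam i ^ 2 * (2 + 4 * δ i ^ 2)) / (2 * (1 - c))) := by
  rw [mgf_pi_sum (μ := fun _ => gaussianReal 0 1)
    (fun i y => lam i * ((y + δ i) ^ 2 - (1 + δ i ^ 2))), mul_sum, sum_div, exp_sum]
  refine prod_le_prod (fun i _ => mgf_nonneg) fun i _ => ?_
  rw [mgf_const_mul]
  refine (mgf_add_sq_sub_gaussianReal_le hc0 hc1 (h i)).trans_eq ?_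
  ring_nf

end WeightedSum

theorem stmt_3_general (n : ℕ) (lam δ : Fin n → ℝ) (γ : ℝ) (hγpos : 0 < γ)
    (hγ : γ ^ 2 = ∑ i, lam i ^ 2 * (2 + 4 * δ i ^ 2))
    (lamMax : ℝ) (hub : ∀ i, lam i ≤ lamMax) (h0 : 0 ≤ lamMax)
    (η : ℝ) (hη : 0 ≤ η) :
    (Measure.pi (fun _ : Fin n => gaussianReal 0 1))
      {x | η * γ ≤ ∑ i, lam i * ((x i + δ i) ^ 2 - (1 + δ i ^ 2))}
      ≤ ENNReal.ofReal (Real.exp (-(η ^ 2 / (2 + 4 * η * lamMax / γ)))) := by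
  have hlam : ∀ t, 0 ≤ t → ∀ i, 2 * (lam i * t) ≤ 2 * lamMax * t := fun t ht i => by
    nlinarith [mul_le_mul_of_nonneg_right (hub i) ht]
  rw [← ofReal_measureReal]
  refine ENNReal.ofReal_le_ofReal ((measureReal_ge_le_of_mgf_le_subGamma (b := 2 * lamMax) hγpos
    (by positivity) hη fun t ht hbt => ⟨?_, ?_⟩).trans_eq (by ring_nf))
  · exact integrable_exp_mul_weighted_sq_sub lam δ fun i => by linarith [hlam t ht i]
  · exact hγ ▸ mgf_weighted_sq_sub_le lam δ (by positivity) hbt (hlam t ht)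

/-- Exponential inequality for quadratic functions of independent standard
Gaussians (Proposition: exponential chi2, first bound).  Here `lamMax` is
characterized as `max (lam 1, …, lam n, 0)`. -/
theorem stmt_3 (n : ℕ) (lam δ : Fin n → ℝ) (γ : ℝ) (hγpos : 0 < γ)
    (hγ : γ ^ 2 = ∑ i, lam i ^ 2 * (2 + 4 * δ i ^ 2))
    (lamMax : ℝ) (hub : ∀ i, lam i ≤ lamMax) (h0 : 0 ≤ lamMax)
    (hattain : lamMax = 0 ∨ ∃ i, lamMax = lam i)
    (η : ℝ) (hη : 0 ≤ η) :
    (Measure.pi (fun _ : Fin n => gaussianReal 0 1))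
      {x | η * γ ≤ ∑ i, lam i * ((x i + δ i) ^ 2 - (1 + δ i ^ 2))}
      ≤ ENNReal.ofReal (Real.exp (-(η ^ 2 / (2 + 4 * η * lamMax / γ)))) :=
  stmt_3_general n lam δ γ hγpos hγ lamMax hub h0 η hη
end

section
/- Let F_n(·|δ²) denote the distribution function of χ²_n(δ²). Then for every r ≥ 0, F_n(n + δ² − r | δ²) ≤ exp( −r²/(4n + 8δ²) ). -/
/-!
Chernoff bound for the lower tail. For `t < 1 / 2` the moment generating function
of `χ²_n(δ²)` is `(1 - 2t)^(-n/2) exp (t δ² / (1 - 2t))`, a product of one-dimensional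
Gaussian integrals. With `t = -l`, the inequalities `log (1 + 2l) ≥ 2l - 2l²` and
`1 / (1 + 2l) ≥ 1 - 2l` bound it by `exp (-l (n + δ²) + l² (n + 2δ²))`, so
`F_n(n + δ² - r) ≤ exp (-l r + l² (n + 2δ²))`, and `l = r / (2n + 4δ²)` gives the claim.
-/

open MeasureTheory ProbabilityTheory Finset

/-- The noncentral chi-squared distribution `χ²_n(δ²)` with `δ² = ∑ i, δ i ^ 2`,
realized as the law of `∑ i, (Z i + δ i)^2` for i.i.d. standard Gaussians `Z i`. -/
noncomputable def noncentralChiSq (n : ℕ) (δ : Fin n → ℝ) : Measure ℝ :=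
  Measure.map (fun x => ∑ i, (x i + δ i) ^ 2)
    (Measure.pi fun _ : Fin n => gaussianReal 0 1)

/-- The distribution function of `χ²_n(δ²)`. -/
noncomputable def noncentralChiSqCDF (n : ℕ) (δ : Fin n → ℝ) (t : ℝ) : ℝ :=
  (noncentralChiSq n δ (Set.Iic t)).toReal

open Real

lemma Real.sub_sq_div_two_le_log_one_add {x : ℝ} (hx : 0 ≤ x) :
    x - x ^ 2 / 2 ≤ log (1 + x) := by
  refine le_trans ?_ (le_log_one_add_of_nonneg hx)
  rw [le_div_iff₀ (by positivity)]
  nlinarith [pow_nonneg hx 3]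

lemma Real.inv_sqrt_one_add_two_mul_le_exp {l : ℝ} (hl : 0 ≤ l) :
    (√(1 + 2 * l))⁻¹ ≤ exp (-l + l ^ 2) := by
  have hu : 0 < 1 + 2 * l := by linarith
  rw [← exp_log (sqrt_pos.mpr hu), ← exp_neg, exp_le_exp, log_sqrt hu.le]
  linarith [sub_sq_div_two_le_log_one_add (by linarith : 0 ≤ 2 * l)]

lemma integral_exp_mul_sq_add_gaussianReal {t : ℝ} (ht : t < 1 / 2) (d : ℝ) :
    ∫ x, exp (t * (x + d) ^ 2) ∂gaussianReal 0 1 =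
      (√(1 - 2 * t))⁻¹ * exp (t * d ^ 2 / (1 - 2 * t)) := by
  have h2t : 1 - 2 * t ≠ 0 := by linarith
  -- complete the square: `-x²/2 + t (x + d)² = -(1/2 - t) (x - m)² + t d² / (1 - 2t)`
  have hsq (x : ℝ) : gaussianPDFReal 0 1 x • exp (t * (x + d) ^ 2) = (√(2 * π))⁻¹ *
      (exp (t * d ^ 2 / (1 - 2 * t)) * exp (-(1 / 2 - t) * (x - 2 * t * d / (1 - 2 * t)) ^ 2)) := by
    simp only [gaussianPDFReal, NNReal.coe_one, mul_one, sub_zero, smul_eq_mul]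
    rw [mul_assoc, ← exp_add, ← exp_add]
    congr 2
    field_simp
    ring
  simp_rw [integral_gaussianReal_eq_integral_smul one_ne_zero, hsq, integral_const_mul,
    integral_sub_right_eq_self (fun y => exp (-(1 / 2 - t) * y ^ 2)), integral_gaussian]
  have hπ : (2 * π)⁻¹ * (π / (1 / 2 - t)) = (1 - 2 * t)⁻¹ := by
    field_simp [pi_ne_zero]
  rw [mul_left_comm, ← sqrt_inv, ← sqrt_mul (by positivity), hπ, sqrt_inv, mul_comm]

section
variable {ι : Type*} [Fintype ι] (δ : ι → ℝ)

lemma mgf_sum_sq_add_pi_gaussianReal {t : ℝ} (ht : t < 1 / 2) :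
    mgf (fun x => ∑ i, (x i + δ i) ^ 2) (Measure.pi fun _ : ι => gaussianReal 0 1) t =
      (√(1 - 2 * t))⁻¹ ^ Fintype.card ι * exp (t * (∑ i, δ i ^ 2) / (1 - 2 * t)) := by
  simp only [mgf, mul_sum, exp_sum]
  rw [integral_fintype_prod_eq_prod (fun i y => exp (t * (y + δ i) ^ 2))]
  simp only [integral_exp_mul_sq_add_gaussianReal ht, prod_mul_distrib, prod_const, card_univ,
    ← exp_sum, ← sum_div]

lemma mgf_sum_sq_add_pi_gaussianReal_neg_le {l : ℝ} (hl : 0 ≤ l) :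
    mgf (fun x => ∑ i, (x i + δ i) ^ 2) (Measure.pi fun _ : ι => gaussianReal 0 1) (-l) ≤
      exp (-l * (Fintype.card ι + ∑ i, δ i ^ 2) +
        l ^ 2 * (Fintype.card ι + 2 * ∑ i, δ i ^ 2)) := by
  set D := ∑ i, δ i ^ 2
  have hD : 0 ≤ D := sum_nonneg fun i _ => sq_nonneg _
  have hu : 1 - 2 * -l = 1 + 2 * l := by ring
  have hshift : -l * D / (1 + 2 * l) ≤ -l * D + 2 * l ^ 2 * D := by
    rw [div_le_iff₀ (by linarith)]
    nlinarith [mul_nonneg (pow_nonneg hl 3) hD]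
  rw [mgf_sum_sq_add_pi_gaussianReal δ (by linarith), hu]
  calc (√(1 + 2 * l))⁻¹ ^ Fintype.card ι * exp (-l * D / (1 + 2 * l))
      ≤ exp (-l + l ^ 2) ^ Fintype.card ι * exp (-l * D + 2 * l ^ 2 * D) := by
        gcongr
        exact Real.inv_sqrt_one_add_two_mul_le_exp hl
    _ = _ := by
        rw [← exp_nat_mul, ← exp_add]
        ring_nf
end

section
variable {n : ℕ} (δ : Fin n → ℝ)

lemma noncentralChiSqCDF_le_exp_mul_mgf {t : ℝ} (ht : t ≤ 0) (ε : ℝ) :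
    noncentralChiSqCDF n δ ε ≤
      exp (-t * ε) *
        mgf (fun x => ∑ i, (x i + δ i) ^ 2) (Measure.pi fun _ => gaussianReal 0 1) t := by
  have hX : Measurable fun x : Fin n → ℝ => ∑ i, (x i + δ i) ^ 2 := by fun_prop
  have hint : Integrable (fun x => exp (t * ∑ i, (x i + δ i) ^ 2))
      (Measure.pi fun _ : Fin n => gaussianReal 0 1) :=
    .of_mem_Icc 0 1 (by fun_prop : Measurable _).aemeasurable <| ae_of_all _ fun x =>
      ⟨(exp_pos _).le, exp_le_one_iff.mpr (mul_nonpos_of_nonpos_of_nonneg ht (by positivity))⟩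
  calc noncentralChiSqCDF n δ ε
      = (Measure.pi fun _ => gaussianReal 0 1).real {x | ∑ i, (x i + δ i) ^ 2 ≤ ε} := by
        rw [noncentralChiSqCDF, noncentralChiSq, Measure.map_apply hX measurableSet_Iic]
        rfl
    _ ≤ _ := measure_le_le_exp_mul_mgf ε ht hint

lemma noncentralChiSqCDF_sub_le_exp {l : ℝ} (hl : 0 ≤ l) (r : ℝ) :
    noncentralChiSqCDF n δ (n + ∑ i, δ i ^ 2 - r) ≤
      exp (-l * r + l ^ 2 * (n + 2 * ∑ i, δ i ^ 2)) :=
  calc noncentralChiSqCDF n δ (n + ∑ i, δ i ^ 2 - r)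
      ≤ exp (l * (n + ∑ i, δ i ^ 2 - r)) *
          exp (-l * (n + ∑ i, δ i ^ 2) + l ^ 2 * (n + 2 * ∑ i, δ i ^ 2)) := by
        grw [noncentralChiSqCDF_le_exp_mul_mgf δ (neg_nonpos.mpr hl), neg_neg,
          mgf_sum_sq_add_pi_gaussianReal_neg_le δ hl, Fintype.card_fin]
    _ = _ := by rw [← exp_add]; ring_nf
end

theorem stmt_7 (n : ℕ) (δ : Fin n → ℝ) (δsq : ℝ) (hδ : δsq = ∑ i, δ i ^ 2)
    (r : ℝ) (hr : 0 ≤ r) :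
    noncentralChiSqCDF n δ (n + δsq - r)
      ≤ Real.exp (-(r ^ 2 / (4 * n + 8 * δsq))) := by
  subst hδ
  set v : ℝ := n + 2 * ∑ i, δ i ^ 2
  have hv : 0 ≤ v := by positivity
  -- the Chernoff exponent `-l r + l² v` is minimised at `l = r / (2v)`
  refine (noncentralChiSqCDF_sub_le_exp δ (by positivity : 0 ≤ r / (2 * v)) r).trans_eq ?_
  rw [show 4 * (n : ℝ) + 8 * ∑ i, δ i ^ 2 = 4 * v by ring]
  rcases hv.eq_or_lt with hv0 | hv0
  · simp [← hv0]
  · congr 1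
    field_simp
    ring
end

section
/- Let F_n(·|δ²) be the distribution function of χ²_n(δ²) and 0 < u < 1/2. Then the (1−u)-quantile satisfies F_n^{-1}(1−u | δ²) ≤ n + δ² + √((4n + 8δ²)·log(1/u)) + 4·log(1/u). -/
open MeasureTheory ProbabilityTheory Finset

/-- The p-quantile of `χ²_n(δ²)`. -/
noncomputable def noncentralChiSqQuantile (n : ℕ) (δ : Fin n → ℝ) (p : ℝ) : ℝ :=
  sInf {t : ℝ | p ≤ noncentralChiSqCDF n δ t}

/-!
Chernoff bound. For a standard Gaussian `Z` and `t < 1/2`,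
`E exp (t (Z + a)²) = (1 - 2t)^(-1/2) exp (t a² / (1 - 2t))`, and the elementary bound
`-log (1 - x) ≤ x + x² / (2 (1 - x))` turns this into
`log E exp (t (Z + a)²) ≤ t (1 + a²) + (1 + 2a²) t² / (1 - 2t)`. Summing over the
coordinates, the log-mgf of `χ²_n(δ²)` is at most `t (n + δ²) + v t² / (1 - 2t)` with
`v = n + 2δ²`: it is sub-gamma. With `L = log (1/u)`, `s = √(4vL) + 4L` and
`t = s / (2 (s + v))` the Chernoff exponent is at most `-L`, so `χ²_n(δ²)` puts mass at most `u`
on `[n + δ² + s, ∞)`.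
-/

open Real

lemma integral_exp_quadratic {b : ℝ} (hb : b < 0) (c d : ℝ) :
    ∫ x : ℝ, exp (b * x ^ 2 + c * x + d) = √(π / -b) * exp (d - c ^ 2 / (4 * b)) := by
  have h := integral_cexp_quadratic (b := b) (by simpa using hb) c d
  apply Complex.ofReal_injective
  rw [← integral_complex_ofReal, Complex.ofReal_mul, Complex.ofReal_exp, sqrt_eq_rpow,
    Complex.ofReal_cpow (div_nonneg pi_pos.le (neg_nonneg.mpr hb.le))]
  push_cast
  simpa using h

lemma integrable_exp_quadratic {b : ℝ} (hb : b < 0) (c d : ℝ) :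
    Integrable fun x : ℝ ↦ exp (b * x ^ 2 + c * x + d) := by
  refine (integrable_cexp_quadratic' (b := b) (by simpa using hb) c d).re.congr
    (.of_forall fun x ↦ ?_)
  simp only [RCLike.re_to_complex, ← Complex.exp_ofReal_re]
  push_cast
  rfl

lemma gaussianPDFReal_mul_exp_mul_sq_add (t a z : ℝ) :
    gaussianPDFReal 0 1 z * exp (t * (z + a) ^ 2)
      = (√(2 * π))⁻¹ * exp ((t - 1 / 2) * z ^ 2 + 2 * t * a * z + t * a ^ 2) := by
  simp only [gaussianPDFReal, NNReal.coe_one, mul_one, sub_zero, mul_assoc, ← exp_add]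
  ring_nf

lemma integrable_exp_mul_sq_add_gaussianReal {t : ℝ} (ht : t < 1 / 2) (a : ℝ) :
    Integrable (fun z ↦ exp (t * (z + a) ^ 2)) (gaussianReal 0 1) := by
  rw [gaussianReal_of_var_ne_zero 0 one_ne_zero, gaussianPDF_def,
    integrable_withDensity_iff_integrable_smul' (by fun_prop) (.of_forall fun _ ↦ by simp)]
  have h := integrable_exp_quadratic (b := t - 1 / 2) (by linarith) (2 * t * a) (t * a ^ 2)
  refine (h.const_mul (√(2 * π))⁻¹).congr (.of_forall fun z ↦ ?_)
  simp [gaussianPDFReal_nonneg, gaussianPDFReal_mul_exp_mul_sq_add]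

lemma mgf_sq_add_gaussianReal {t : ℝ} (ht : t < 1 / 2) (a : ℝ) :
    mgf (fun z ↦ (z + a) ^ 2) (gaussianReal 0 1) t
      = (√(1 - 2 * t))⁻¹ * exp (t * a ^ 2 / (1 - 2 * t)) := by
  have h2t : 0 < 1 - 2 * t := by linarith
  simp_rw [mgf, integral_gaussianReal_eq_integral_smul one_ne_zero, smul_eq_mul,
    gaussianPDFReal_mul_exp_mul_sq_add, integral_const_mul,
    integral_exp_quadratic (show t - 1 / 2 < 0 by linarith)]
  rw [show π / -(t - 1 / 2) = 2 * π / (1 - 2 * t) by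
      rw [div_eq_div_iff (by linarith : (0:ℝ) < -(t - 1 / 2)).ne' h2t.ne']; ring,
    sqrt_div' _ h2t.le, ← mul_assoc, inv_mul_eq_div, div_div_cancel_left' (by positivity)]
  congr 2
  rw [eq_div_iff h2t.ne', sub_mul, show 4 * (t - 1 / 2) = -2 * (1 - 2 * t) by ring,
    div_mul_eq_mul_div, mul_div_mul_right _ _ h2t.ne']
  ring

lemma neg_log_one_sub_le {x : ℝ} (h0 : 0 ≤ x) (h1 : x < 1) :
    -log (1 - x) ≤ x + x ^ 2 / (2 * (1 - x)) := by
  have h1x : 0 < 1 - x := by linarith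
  set z := x + x ^ 2 / (2 * (1 - x))
  have hz : 0 ≤ z := by positivity
  have hz_mul : 2 * (1 - x) * z = x * (2 - x) := by simp only [z]; field_simp; ring
  -- `(1 - x) (1 + z) = 1 - x² / 2`, and `(1 - x) z² ≥ x²` because `(2 - x)² ≥ 4 (1 - x)`
  have hpoly : 1 ≤ (1 - x) * (1 + z + z ^ 2 / 2) := by
    nlinarith [sq_nonneg x, sq_nonneg (x * x), sq_nonneg z]
  rw [← log_inv, log_le_iff_le_exp (by positivity), inv_eq_one_div, div_le_iff₀ h1x]
  nlinarith [quadratic_le_exp_of_nonneg hz]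

lemma mgf_sq_add_gaussianReal_le {t : ℝ} (ht0 : 0 ≤ t) (ht : t < 1 / 2) (a : ℝ) :
    mgf (fun z ↦ (z + a) ^ 2) (gaussianReal 0 1) t
      ≤ exp (t * (1 + a ^ 2) + (1 + 2 * a ^ 2) * t ^ 2 / (1 - 2 * t)) := by
  have h2t : 0 < 1 - 2 * t := by linarith
  have hsqrt : (√(1 - 2 * t))⁻¹ = exp (-log (1 - 2 * t) / 2) := by
    rw [sqrt_eq_rpow, rpow_def_of_pos h2t, ← exp_neg]
    ring_nf
  have hlog : -log (1 - 2 * t) / 2 ≤ t + t ^ 2 / (1 - 2 * t) := by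
    have h := neg_log_one_sub_le (x := 2 * t) (by linarith) (by linarith)
    rw [mul_comm 2 (1 - 2 * t), ← div_div] at h
    linarith [show (2 * t) ^ 2 / (1 - 2 * t) / 2 = 2 * (t ^ 2 / (1 - 2 * t)) by ring]
  have hsplit : t * a ^ 2 / (1 - 2 * t) = t * a ^ 2 + 2 * a ^ 2 * t ^ 2 / (1 - 2 * t) := by
    rw [add_div' _ _ _ h2t.ne']
    ring
  rw [mgf_sq_add_gaussianReal ht, hsqrt, ← exp_add, exp_le_exp, hsplit, add_mul, add_div,
    one_mul]
  linarith

lemma exists_neg_mul_add_mul_sq_div_le {v L : ℝ} (hv : 0 < v) (hL : 0 < L) :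
    ∃ t, 0 ≤ t ∧ t < 1 / 2 ∧
      -(t * (√(4 * v * L) + 4 * L)) + v * t ^ 2 / (1 - 2 * t) ≤ -L := by
  set S := √(4 * v * L)
  set s := S + 4 * L
  have hS2 : S ^ 2 = 4 * v * L := sq_sqrt (by positivity)
  have hs : 0 < s := by positivity
  refine ⟨s / (2 * (s + v)), by positivity, ?_, ?_⟩
  · rw [div_lt_iff₀ (by positivity)]
    linarith
  · -- here the left side is `-s ^ 2 / (4 * (s + v))`, and `s ^ 2 - 4 * L * (s + v) = 4 * L * S`
    have h12 : 1 - 2 * (s / (2 * (s + v))) = v / (s + v) := by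
      field_simp
      ring
    rw [h12]
    field_simp
    nlinarith [mul_nonneg hL.le (sqrt_nonneg (4 * v * L))]

section NoncentralChiSq

variable {n : ℕ} (δ : Fin n → ℝ)

lemma measurable_sum_sq_add : Measurable fun x : Fin n → ℝ ↦ ∑ i, (x i + δ i) ^ 2 := by
  fun_prop

instance : IsProbabilityMeasure (noncentralChiSq n δ) :=
  Measure.isProbabilityMeasure_map (measurable_sum_sq_add δ).aemeasurable

lemma exp_mul_sum_sq_add (t : ℝ) (x : Fin n → ℝ) :
    exp (t * ∑ i, (x i + δ i) ^ 2) = ∏ i, exp (t * (x i + δ i) ^ 2) := by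
  rw [mul_sum, exp_sum]

lemma mgf_id_noncentralChiSq (t : ℝ) :
    mgf id (noncentralChiSq n δ) t
      = ∏ i, mgf (fun z ↦ (z + δ i) ^ 2) (gaussianReal 0 1) t := by
  rw [noncentralChiSq, mgf_id_map (measurable_sum_sq_add δ).aemeasurable, mgf]
  simp_rw [exp_mul_sum_sq_add]
  exact integral_fintype_prod_eq_prod (fun i z ↦ exp (t * (z + δ i) ^ 2))

lemma integrable_exp_mul_noncentralChiSq {t : ℝ} (ht : t < 1 / 2) :
    Integrable (fun x ↦ exp (t * x)) (noncentralChiSq n δ) := by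
  rw [noncentralChiSq, integrable_map_measure (by fun_prop) (measurable_sum_sq_add δ).aemeasurable]
  simp_rw [Function.comp_def, exp_mul_sum_sq_add]
  exact .fintype_prod fun i ↦ integrable_exp_mul_sq_add_gaussianReal ht (δ i)

lemma mgf_id_noncentralChiSq_le {t : ℝ} (ht0 : 0 ≤ t) (ht : t < 1 / 2) :
    mgf id (noncentralChiSq n δ) t
      ≤ exp (t * (n + ∑ i, δ i ^ 2) + (n + 2 * ∑ i, δ i ^ 2) * t ^ 2 / (1 - 2 * t)) := by
  calc mgf id (noncentralChiSq n δ) t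
      ≤ ∏ i, exp (t * (1 + δ i ^ 2) + (1 + 2 * δ i ^ 2) * t ^ 2 / (1 - 2 * t)) := by
        rw [mgf_id_noncentralChiSq]
        exact prod_le_prod (fun _ _ ↦ mgf_nonneg) fun i _ ↦
          mgf_sq_add_gaussianReal_le ht0 ht (δ i)
    _ = _ := by
        rw [← exp_sum]
        simp only [sum_add_distrib, ← mul_sum, ← sum_div, ← sum_mul, sum_const, card_univ,
          Fintype.card_fin, nsmul_eq_mul, mul_one]

theorem noncentralChiSq_real_tail_le (hn : 0 < n) {L : ℝ} (hL : 0 < L) :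
    (noncentralChiSq n δ).real
        {x | n + ∑ i, δ i ^ 2 + √((4 * n + 8 * ∑ i, δ i ^ 2) * L) + 4 * L ≤ x}
      ≤ exp (-L) := by
  set v := (n : ℝ) + 2 * ∑ i, δ i ^ 2
  have hv : 0 < v := by positivity
  obtain ⟨t, ht0, ht, hexp⟩ := exists_neg_mul_add_mul_sq_div_le hv hL
  rw [show 4 * v * L = (4 * n + 8 * ∑ i, δ i ^ 2) * L by ring] at hexp
  calc _ ≤ exp (-t * (n + ∑ i, δ i ^ 2 + √((4 * n + 8 * ∑ i, δ i ^ 2) * L) + 4 * L))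
          * mgf id (noncentralChiSq n δ) t :=
        measure_ge_le_exp_mul_mgf _ ht0 (integrable_exp_mul_noncentralChiSq δ ht)
    _ ≤ exp (-t * (n + ∑ i, δ i ^ 2 + √((4 * n + 8 * ∑ i, δ i ^ 2) * L) + 4 * L))
          * exp (t * (n + ∑ i, δ i ^ 2) + v * t ^ 2 / (1 - 2 * t)) := by
        gcongr
        exact mgf_id_noncentralChiSq_le δ ht0 ht
    _ ≤ exp (-L) := by
        rw [← exp_add, exp_le_exp]
        linarith

lemma noncentralChiSqCDF_eq_zero_of_neg {x : ℝ} (hx : x < 0) :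
    noncentralChiSqCDF n δ x = 0 := by
  have h_empty : (fun y : Fin n → ℝ ↦ ∑ i, (y i + δ i) ^ 2) ⁻¹' Set.Iic x = ∅ :=
    Set.eq_empty_of_forall_notMem fun y hy ↦
      hx.not_ge ((sum_nonneg fun i _ ↦ sq_nonneg _).trans hy)
  rw [noncentralChiSqCDF, noncentralChiSq,
    Measure.map_apply (measurable_sum_sq_add δ) measurableSet_Iic, h_empty, measure_empty,
    ENNReal.toReal_zero]

lemma noncentralChiSqQuantile_le {p a : ℝ} (hp : 0 < p)
    (ha : p ≤ noncentralChiSqCDF n δ a) : noncentralChiSqQuantile n δ p ≤ a := by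
  refine csInf_le ⟨0, fun x hx ↦ ?_⟩ ha
  by_contra! hx0
  have : p ≤ 0 := (noncentralChiSqCDF_eq_zero_of_neg δ hx0) ▸ hx
  linarith

lemma one_sub_real_tail_le_noncentralChiSqCDF (a : ℝ) :
    1 - (noncentralChiSq n δ).real {x | a ≤ x} ≤ noncentralChiSqCDF n δ a := by
  have h := probReal_compl_eq_one_sub (μ := noncentralChiSq n δ) (measurableSet_Ioi (a := a))
  rw [Set.compl_Ioi] at h
  rw [noncentralChiSqCDF, ← measureReal_def, h]
  exact sub_le_sub_left (measureReal_mono Set.Ioi_subset_Ici_self) 1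

end NoncentralChiSq

theorem stmt_8 (n : ℕ) (hn : 1 ≤ n) (δ : Fin n → ℝ) (δsq : ℝ)
    (hδ : δsq = ∑ i, δ i ^ 2) (u : ℝ) (hu0 : 0 < u) (hu : u < 1 / 2) :
    noncentralChiSqQuantile n δ (1 - u)
      ≤ n + δsq + Real.sqrt ((4 * n + 8 * δsq) * Real.log u⁻¹)
          + 4 * Real.log u⁻¹ := by
  have hL : 0 < log u⁻¹ := log_pos ((one_lt_inv₀ hu0).2 (by linarith))
  have htail := noncentralChiSq_real_tail_le δ hn hL
  rw [exp_neg, exp_log (inv_pos.2 hu0), inv_inv, ← hδ] at htail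
  refine noncentralChiSqQuantile_le δ (by linarith) ?_
  linarith [one_sub_real_tail_le_noncentralChiSqCDF δ
    (n + δsq + √((4 * n + 8 * δsq) * log u⁻¹) + 4 * log u⁻¹)]
end

section
/- Let a, b, c ≥ 0 and define h(x) := x + √(a + bx) + c for x ≥ 0. Then h(h(x)) ≤ x + 2√(a + bx) + b/2 + √(bc) + 2c for all x ≥ 0. -/
/-! The inner square root is at most `√(s² + b s + b c)` with `s = √(a + b x)`, and completing the square gives
`s² + b s + b c ≤ (s + b/2 + √(bc))²`. -/

open Real

lemma self_le_sqrt_sq (x : ℝ) : x ≤ √x ^ 2 := by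
  rw [sq_sqrt']
  exact le_max_left x 0

lemma sqrt_le_add_half_add_sqrt {s b t y : ℝ} (hs : 0 ≤ s) (hb : 0 ≤ b)
    (hy : y ≤ s ^ 2 + b * s + t) : √y ≤ s + b / 2 + √t := by
  rw [sqrt_le_left (by positivity)]
  nlinarith [self_le_sqrt_sq t, mul_nonneg (by positivity : 0 ≤ s + b / 2) (sqrt_nonneg t)]

theorem stmt_12_general (a b c : ℝ) (hb : 0 ≤ b)
    (h : ℝ → ℝ) (hdef : ∀ x, h x = x + Real.sqrt (a + b * x) + c)
    (x : ℝ) :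
    h (h x) ≤ x + 2 * Real.sqrt (a + b * x) + b / 2 + Real.sqrt (b * c) + 2 * c := by
  have hy : a + b * h x ≤ √(a + b * x) ^ 2 + b * √(a + b * x) + b * c := by
    rw [hdef]
    linarith [self_le_sqrt_sq (a + b * x)]
  have key := sqrt_le_add_half_add_sqrt (sqrt_nonneg _) hb hy
  rw [hdef x] at key
  rw [hdef (h x), hdef x]
  linarith

theorem stmt_12 (a b c : ℝ) (ha : 0 ≤ a) (hb : 0 ≤ b) (hc : 0 ≤ c)
    (h : ℝ → ℝ) (hdef : ∀ x, h x = x + Real.sqrt (a + b * x) + c)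
    (x : ℝ) (hx : 0 ≤ x) :
    h (h x) ≤ x + 2 * Real.sqrt (a + b * x) + b / 2 + Real.sqrt (b * c) + 2 * c :=
  stmt_12_general a b c hb h hdef x
end

section
/- Let F_o : [0,1] → ℝ be continuous with unique minimizer s_o, and suppose lim_{t→s_o} (F_o(t) − F_o(s_o))/|t − s_o|^γ = 1 for some γ > 1/2. Then for every sequence r_n → 0 of positive numbers, sup{ |t − s_o| : t ∈ [0,1], F_o(t) − F_o(s_o) ≤ r_n } = O(r_n^{1/γ}). -/
/-!
Near `s₀` the expansion gives `|t - s₀| ^ γ ≤ 2 (F t - F s₀)`, so a point of the level set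
`F t - F s₀ ≤ r` within that neighbourhood satisfies `|t - s₀| ≤ (2 r) ^ (1 / γ)`. Away from
`s₀`, compactness and uniqueness of the minimizer give a positive gap `m ≤ F t - F s₀`, so once
`r < m` the level set contains no far points at all.
-/

open Filter Set Real

section LevelSetRadius

variable {X : Type*} [MetricSpace X] {K : Set X} {F : X → ℝ} {s₀ : X}

lemma exists_pos_le_sub_of_le_dist (hK : IsCompact K) (hF : ContinuousOn F K)
    (hmin : ∀ t ∈ K, t ≠ s₀ → F s₀ < F t) {δ : ℝ} (hδ : 0 < δ) :
    ∃ m > 0, ∀ t ∈ K, δ ≤ dist t s₀ → m ≤ F t - F s₀ := by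
  set K' := K ∩ {t | δ ≤ dist t s₀}
  rcases K'.eq_empty_or_nonempty with hempty | hne
  · exact ⟨1, one_pos, fun t ht hfar => (eq_empty_iff_forall_notMem.1 hempty t ⟨ht, hfar⟩).elim⟩
  have hK' : IsCompact K' := hK.inter_right (isClosed_le continuous_const (by fun_prop))
  obtain ⟨t₀, ⟨ht₀K, ht₀far⟩, ht₀min⟩ := hK'.exists_isMinOn hne (hF.mono inter_subset_left)
  have ht₀ : t₀ ≠ s₀ := by
    rintro rfl
    simp only [mem_ofPred_eq, dist_self] at ht₀far
    linarith
  exact ⟨F t₀ - F s₀, sub_pos.2 (hmin t₀ ht₀K ht₀), fun t ht hfar =>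
    sub_le_sub_right (ht₀min ⟨ht, hfar⟩) _⟩

lemma exists_pos_rpow_dist_le_two_mul_sub {γ : ℝ} (hγ : 0 < γ)
    (hexp : Tendsto (fun t => (F t - F s₀) / dist t s₀ ^ γ) (nhdsWithin s₀ (K \ {s₀})) (nhds 1)) :
    ∃ δ > 0, ∀ t ∈ K, dist t s₀ < δ → dist t s₀ ^ γ ≤ 2 * (F t - F s₀) := by
  have hhalf : ∀ᶠ t in nhdsWithin s₀ (K \ {s₀}), 1 / 2 < (F t - F s₀) / dist t s₀ ^ γ :=
    hexp.eventually (eventually_gt_nhds (by norm_num))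
  obtain ⟨δ, hδ, hball⟩ := Metric.mem_nhdsWithin_iff.1 hhalf
  refine ⟨δ, hδ, fun t ht hnear => ?_⟩
  rcases eq_or_ne t s₀ with rfl | hne
  · simp [zero_rpow hγ.ne']
  have hpow : 0 < dist t s₀ ^ γ := rpow_pos_of_pos (dist_pos.2 hne) γ
  have hratio := (lt_div_iff₀ hpow).1 (hball ⟨Metric.mem_ball.2 hnear, ht, hne⟩)
  linarith

lemma exists_pos_dist_le_rpow_of_sub_le (hK : IsCompact K) (hF : ContinuousOn F K)
    (hmin : ∀ t ∈ K, t ≠ s₀ → F s₀ < F t) {γ : ℝ} (hγ : 0 < γ)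
    (hexp : Tendsto (fun t => (F t - F s₀) / dist t s₀ ^ γ) (nhdsWithin s₀ (K \ {s₀})) (nhds 1)) :
    ∃ ρ > 0, ∀ r < ρ, ∀ t ∈ K, F t - F s₀ ≤ r → dist t s₀ ≤ (2 * r) ^ (1 / γ) := by
  obtain ⟨δ, hδ, hgrowth⟩ := exists_pos_rpow_dist_le_two_mul_sub hγ hexp
  obtain ⟨m, hm, hgap⟩ := exists_pos_le_sub_of_le_dist hK hF hmin hδ
  refine ⟨m, hm, fun r hr t ht hle => ?_⟩
  have hnear : dist t s₀ < δ := by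
    by_contra! hfar
    linarith [hgap t ht hfar]
  calc dist t s₀ = (dist t s₀ ^ γ) ^ (1 / γ) := by
        rw [one_div, rpow_rpow_inv dist_nonneg hγ.ne']
    _ ≤ (2 * r) ^ (1 / γ) := by
        gcongr
        linarith [hgrowth t ht hnear]

end LevelSetRadius

theorem stmt_18_general (F : ℝ → ℝ) (hF : ContinuousOn F (Icc 0 1))
    (s₀ : ℝ)
    (hmin : ∀ t ∈ Icc (0 : ℝ) 1, t ≠ s₀ → F s₀ < F t)
    (γ : ℝ) (hγ : 1 / 2 < γ)
    (hexp : Tendsto (fun t => (F t - F s₀) / |t - s₀| ^ γ)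
      (nhdsWithin s₀ (Icc 0 1 \ {s₀})) (nhds 1))
    (r : ℕ → ℝ) (hrpos : ∀ n, 0 < r n) (hr : Tendsto r atTop (nhds 0)) :
    (fun n => sSup {d : ℝ | ∃ t ∈ Icc (0 : ℝ) 1,
        F t - F s₀ ≤ r n ∧ d = |t - s₀|})
      =O[atTop] fun n => r n ^ (1 / γ) := by
  have hγ₀ : 0 < γ := by linarith
  obtain ⟨ρ, hρ, hradius⟩ := exists_pos_dist_le_rpow_of_sub_le isCompact_Icc hF hmin hγ₀
    (by simpa only [Real.dist_eq] using hexp)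
  refine Asymptotics.IsBigO.of_bound (2 ^ (1 / γ)) ?_
  filter_upwards [hr.eventually (eventually_lt_nhds hρ)] with n hn
  set S := {d : ℝ | ∃ t ∈ Icc (0 : ℝ) 1, F t - F s₀ ≤ r n ∧ d = |t - s₀|}
  have hsup_le : sSup S ≤ (2 * r n) ^ (1 / γ) := by
    refine Real.sSup_le ?_ (by have := hrpos n; positivity)
    rintro d ⟨t, ht, hle, rfl⟩
    simpa only [Real.dist_eq] using hradius (r n) hn t ht hle
  have hsup_nonneg : 0 ≤ sSup S :=
    Real.sSup_nonneg (by rintro d ⟨t, -, -, rfl⟩; positivity)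
  rw [Real.norm_of_nonneg hsup_nonneg, Real.norm_of_nonneg (by have := hrpos n; positivity),
    ← mul_rpow zero_le_two (hrpos n).le]
  exact hsup_le

/-- Deterministic rate for the naive confidence region: under a γ-order
expansion of `F` at its unique minimizer `s₀`, the level sets
`{t ∈ [0,1] : F t ≤ F s₀ + r}` have radius `O(r^{1/γ})` as `r → 0`. -/
theorem stmt_18 (F : ℝ → ℝ) (hF : ContinuousOn F (Icc 0 1))
    (s₀ : ℝ) (hs₀ : s₀ ∈ Icc (0 : ℝ) 1)
    (hmin : ∀ t ∈ Icc (0 : ℝ) 1, t ≠ s₀ → F s₀ < F t)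
    (γ : ℝ) (hγ : 1 / 2 < γ)
    (hexp : Tendsto (fun t => (F t - F s₀) / |t - s₀| ^ γ)
      (nhdsWithin s₀ (Icc 0 1 \ {s₀})) (nhds 1))
    (r : ℕ → ℝ) (hrpos : ∀ n, 0 < r n) (hr : Tendsto r atTop (nhds 0)) :
    (fun n => sSup {d : ℝ | ∃ t ∈ Icc (0 : ℝ) 1,
        F t - F s₀ ≤ r n ∧ d = |t - s₀|})
      =O[atTop] fun n => r n ^ (1 / γ) :=
  stmt_18_general F hF s₀ hmin γ hγ hexp r hrpos hr
end

section
/- Let c_n → ∞ be positive reals, γ > 1/2, and let F_o be continuous on [0,1] with unique minimizer s_o and lim_{t→s_o}(F_o(t)−F_o(s_o))/|t−s_o|^γ = 1. Suppose a point s ∈ [0,1] satisfies F_o(s) − F_o(s_o) ≤ c_n^{-1} √(|s−s_o|)(√(2 log(e/|s−s_o|)) + K) for a fixed constant K. Then |s − s_o| = O( log(c_n)^{1/(2γ−1)} · c_n^{−2/(2γ−1)} ). -/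
open Filter Set Real

/-- Deterministic rate underlying the multiscale confidence region in the toy
model: if `F(s n) − F(s₀) ≤ c n⁻¹ √|s n − s₀| (√(2 log(e/|s n − s₀|)) + K)`
with `c n → ∞`, then `|s n − s₀| = O((log c n)^{1/(2γ−1)} c n^{−2/(2γ−1)})`. -/
theorem stmt_19 (F : ℝ → ℝ) (hF : ContinuousOn F (Icc 0 1))
    (s₀ : ℝ) (hs₀ : s₀ ∈ Icc (0 : ℝ) 1)
    (hmin : ∀ t ∈ Icc (0 : ℝ) 1, t ≠ s₀ → F s₀ < F t)
    (γ : ℝ) (hγ : 1 / 2 < γ)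
    (hexp : Tendsto (fun t => (F t - F s₀) / |t - s₀| ^ γ)
      (nhdsWithin s₀ (Icc 0 1 \ {s₀})) (nhds 1))
    (c : ℕ → ℝ) (hcpos : ∀ n, 0 < c n) (hc : Tendsto c atTop atTop)
    (K : ℝ) (s : ℕ → ℝ) (hs : ∀ n, s n ∈ Icc (0 : ℝ) 1)
    (hineq : ∀ n, F (s n) - F s₀ ≤ (c n)⁻¹ * Real.sqrt |s n - s₀| *
      (Real.sqrt (2 * Real.log (Real.exp 1 / |s n - s₀|)) + K)) :
    (fun n => |s n - s₀|)
      =O[atTop] fun n =>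
        Real.log (c n) ^ (1 / (2 * γ - 1)) * c n ^ (-(2 / (2 * γ - 1))) := by
  set x : ℕ → ℝ := fun n => |s n - s₀| with hx_def
  set β : ℝ := 2 * γ - 1 with hβ_def
  have hβ : 0 < β := by simp only [hβ_def]; linarith
  have hx0 : ∀ n, 0 ≤ x n := fun n => abs_nonneg _
  have hx1 : ∀ n, x n ≤ 1 := by
    intro n
    have h1 := hs n
    have h2 := hs₀
    rw [hx_def]
    rw [abs_le]
    constructor
    · linarith [h1.1, h2.2]
    · linarith [h1.2, h2.1]
  have hFs_nonneg : ∀ n, 0 ≤ F (s n) - F s₀ := by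
    intro n
    rcases eq_or_ne (s n) s₀ with h | h
    · simp [h]
    · linarith [hmin (s n) (hs n) h]
  -- uniform bound on the right hand side
  have hM : ∀ n, (c n)⁻¹ * Real.sqrt |s n - s₀| *
      (Real.sqrt (2 * Real.log (Real.exp 1 / |s n - s₀|)) + K)
      ≤ (c n)⁻¹ * (Real.sqrt 6 + |K|) := by
    intro n
    have hxn0 := hx0 n
    have hxn1 := hx1 n
    have hb : Real.sqrt (x n) * (Real.sqrt (2 * Real.log (Real.exp 1 / x n)) + K)
        ≤ Real.sqrt 6 + |K| := by
      have h1 : Real.sqrt (x n) * Real.sqrt (2 * Real.log (Real.exp 1 / x n))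
          ≤ Real.sqrt 6 := by
        rw [← Real.sqrt_mul hxn0]
        apply Real.sqrt_le_sqrt
        rcases eq_or_lt_of_le hxn0 with h | h
        · rw [← h]; norm_num
        · have hlog : Real.log (Real.exp 1 / x n) = 1 - Real.log (x n) := by
            rw [Real.log_div (Real.exp_ne_zero 1) (ne_of_gt h), Real.log_exp]
          have hl : Real.log (x n)⁻¹ ≤ (x n)⁻¹ - 1 :=
            Real.log_le_sub_one_of_pos (by positivity)
          rw [Real.log_inv] at hl
          have hxinv : x n * (x n)⁻¹ = 1 := mul_inv_cancel₀ (ne_of_gt h)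
          rw [hlog]
          nlinarith [mul_le_mul_of_nonneg_left hl (le_of_lt h)]
      have h2 : Real.sqrt (x n) * K ≤ |K| := by
        calc Real.sqrt (x n) * K ≤ |Real.sqrt (x n) * K| := le_abs_self _
          _ = Real.sqrt (x n) * |K| := by
              rw [abs_mul, abs_of_nonneg (Real.sqrt_nonneg _)]
          _ ≤ 1 * |K| := by
              apply mul_le_mul_of_nonneg_right _ (abs_nonneg K)
              rw [show (1 : ℝ) = Real.sqrt 1 by simp]
              exact Real.sqrt_le_sqrt hxn1
          _ = |K| := one_mul _
      rw [mul_add]; linarith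
    calc (c n)⁻¹ * Real.sqrt |s n - s₀| *
        (Real.sqrt (2 * Real.log (Real.exp 1 / |s n - s₀|)) + K)
        = (c n)⁻¹ * (Real.sqrt (x n) *
          (Real.sqrt (2 * Real.log (Real.exp 1 / x n)) + K)) := by
          rw [hx_def]; ring
      _ ≤ (c n)⁻¹ * (Real.sqrt 6 + |K|) :=
          mul_le_mul_of_nonneg_left hb (inv_nonneg.mpr (hcpos n).le)
  -- F (s n) - F s₀ → 0
  have hFto0 : Tendsto (fun n => F (s n) - F s₀) atTop (nhds 0) := by
    apply squeeze_zero hFs_nonneg (fun n => (hineq n).trans (hM n))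
    have := hc.inv_tendsto_atTop.mul_const (Real.sqrt 6 + |K|)
    rwa [zero_mul] at this
  -- x → 0
  have hxto0 : Tendsto x atTop (nhds 0) := by
    rw [NormedAddCommGroup.tendsto_nhds_zero]
    intro ε hε
    set S : Set ℝ := Icc 0 1 ∩ {t | ε ≤ |t - s₀|} with hS_def
    have hSclosed : IsClosed S :=
      isClosed_Icc.inter (isClosed_le continuous_const
        ((continuous_id.sub continuous_const).abs))
    have hScompact : IsCompact S := isCompact_Icc.inter_right
      (isClosed_le continuous_const ((continuous_id.sub continuous_const).abs))
    rcases S.eq_empty_or_nonempty with hemp | hne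
    · filter_upwards with n
      rw [Real.norm_eq_abs, abs_of_nonneg (hx0 n)]
      by_contra h
      push_neg at h
      have : s n ∈ S := ⟨hs n, h⟩
      rw [hemp] at this
      exact this
    · obtain ⟨t₀, ht₀S, hmin'⟩ :=
        hScompact.exists_isMinOn hne (hF.mono inter_subset_left)
      have ht₀ne : t₀ ≠ s₀ := by
        intro h
        have := ht₀S.2
        rw [h] at this
        simp at this
        linarith
      have hδ : 0 < F t₀ - F s₀ := by linarith [hmin t₀ ht₀S.1 ht₀ne]
      have h1 : ∀ᶠ n in atTop, F (s n) - F s₀ < F t₀ - F s₀ :=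
        hFto0.eventually_lt_const hδ
      filter_upwards [h1] with n hn
      rw [Real.norm_eq_abs, abs_of_nonneg (hx0 n)]
      by_contra h
      push_neg at h
      have hsn : s n ∈ S := ⟨hs n, h⟩
      have := isMinOn_iff.mp hmin' (s n) hsn
      linarith
  -- key inequality eventually
  have hev : ∀ᶠ t in nhdsWithin s₀ (Icc 0 1 \ {s₀}),
      1 / 2 < (F t - F s₀) / |t - s₀| ^ γ :=
    hexp.eventually (eventually_gt_nhds (by norm_num))
  rw [eventually_nhdsWithin_iff, Metric.eventually_nhds_iff] at hev
  obtain ⟨δ₀, hδ₀, hball⟩ := hev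
  have hxsmall : ∀ᶠ n in atTop, x n < δ₀ := by
    have := hxto0.eventually_lt_const hδ₀
    exact this
  have hkey : ∀ᶠ n in atTop, x n ^ γ ≤
      2 * ((c n)⁻¹ * Real.sqrt (x n) *
      (Real.sqrt (2 * Real.log (Real.exp 1 / x n)) + K)) := by
    filter_upwards [hxsmall] with n hn
    rcases eq_or_ne (s n) s₀ with h | h
    · have hx : x n = 0 := by rw [hx_def]; simp [h]
      rw [hx, Real.zero_rpow (by linarith : γ ≠ 0)]
      simp
    · have hsn : s n ∈ Icc (0:ℝ) 1 \ {s₀} := ⟨hs n, h⟩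
      have hd : dist (s n) s₀ < δ₀ := by
        rw [Real.dist_eq]; exact hn
      have hxpos : 0 < x n := abs_pos.mpr (sub_ne_zero_of_ne h)
      have hpow : 0 < x n ^ γ := Real.rpow_pos_of_pos hxpos γ
      have hratio : 1 / 2 < (F (s n) - F s₀) / x n ^ γ := hball hd hsn
      rw [lt_div_iff₀ hpow] at hratio
      have hineq' : F (s n) - F s₀ ≤ (c n)⁻¹ * Real.sqrt (x n) *
          (Real.sqrt (2 * Real.log (Real.exp 1 / x n)) + K) := hineq n
      linarith
  have hclarge : ∀ᶠ n in atTop, Real.exp 1 ≤ c n :=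
    hc.eventually_ge_atTop _
  -- constants
  set A : ℝ := Real.sqrt (2 + 4 / β) + |K| with hA_def
  have hA0 : 0 ≤ A := by positivity
  rw [Asymptotics.isBigO_iff]
  refine ⟨1 + (2 * A) ^ (2 / β), ?_⟩
  filter_upwards [hkey, hclarge] with n hn hcn
  have hcn1 : 1 < c n := lt_of_lt_of_le (by
    have := Real.exp_pos 1
    nlinarith [Real.add_one_le_exp (1:ℝ)]) hcn
  have hlogc : 1 ≤ Real.log (c n) := by
    rw [show (1:ℝ) = Real.log (Real.exp 1) by simp]
    exact Real.log_le_log (Real.exp_pos 1) hcn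
  have hlogc0 : 0 < Real.log (c n) := by linarith
  have hg0 : 0 ≤ Real.log (c n) ^ (1 / β) * c n ^ (-(2 / β)) := by positivity
  have hgnorm : ‖Real.log (c n) ^ (1 / (2 * γ - 1)) * c n ^ (-(2 / (2 * γ - 1)))‖
      = Real.log (c n) ^ (1 / β) * c n ^ (-(2 / β)) := by
    rw [Real.norm_eq_abs, abs_of_nonneg hg0]
  rw [Real.norm_eq_abs, abs_of_nonneg (hx0 n), hgnorm]
  have hgone : 1 ≤ Real.log (c n) ^ (1 / β) :=
    Real.one_le_rpow hlogc (by positivity)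
  rcases le_or_gt (x n) (c n ^ (-(2 / β))) with hcase | hcase
  · -- small case
    have : x n ≤ Real.log (c n) ^ (1 / β) * c n ^ (-(2 / β)) := by
      calc x n ≤ c n ^ (-(2 / β)) := hcase
        _ = 1 * c n ^ (-(2 / β)) := (one_mul _).symm
        _ ≤ Real.log (c n) ^ (1 / β) * c n ^ (-(2 / β)) :=
            mul_le_mul_of_nonneg_right hgone (by positivity)
    nlinarith [Real.rpow_nonneg (by positivity : (0:ℝ) ≤ 2 * A) (2 / β), hg0]
  · -- main case
    have hxpos : 0 < x n := lt_of_le_of_lt (by positivity) hcase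
    -- bound the log
    have hloge : Real.log (Real.exp 1 / x n) ≤ (1 + 2 / β) * Real.log (c n) := by
      rw [Real.log_div (Real.exp_ne_zero 1) (ne_of_gt hxpos), Real.log_exp]
      have : Real.log (c n ^ (-(2 / β))) < Real.log (x n) :=
        Real.log_lt_log (by positivity) hcase
      rw [Real.log_rpow (by linarith : 0 < c n)] at this
      have h2β : 0 < 2 / β := by positivity
      nlinarith
    have hbr : Real.sqrt (2 * Real.log (Real.exp 1 / x n)) + K
        ≤ A * Real.sqrt (Real.log (c n)) := by
      have h1 : Real.sqrt (2 * Real.log (Real.exp 1 / x n))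
          ≤ Real.sqrt ((2 + 4 / β) * Real.log (c n)) := by
        apply Real.sqrt_le_sqrt
        calc 2 * Real.log (Real.exp 1 / x n) ≤ 2 * ((1 + 2 / β) * Real.log (c n)) := by
              linarith
          _ = (2 + 4 / β) * Real.log (c n) := by ring
      have h2 : Real.sqrt ((2 + 4 / β) * Real.log (c n))
          = Real.sqrt (2 + 4 / β) * Real.sqrt (Real.log (c n)) :=
        Real.sqrt_mul (by positivity) _
      have h3 : K ≤ |K| * Real.sqrt (Real.log (c n)) := by
        have : 1 ≤ Real.sqrt (Real.log (c n)) := by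
          rw [show (1:ℝ) = Real.sqrt 1 by simp]
          exact Real.sqrt_le_sqrt hlogc
        nlinarith [le_abs_self K, abs_nonneg K]
      rw [hA_def]
      nlinarith [h1, h2, h3]
    -- x ^ (β/2) ≤ 2 A √(log c) / c
    have hsq : Real.sqrt (x n) = x n ^ ((1:ℝ)/2) := Real.sqrt_eq_rpow (x n)
    have hstep : x n ^ γ ≤ x n ^ ((1:ℝ)/2) *
        (2 * A * Real.sqrt (Real.log (c n)) * (c n)⁻¹) := by
      have hc0 : (0:ℝ) < (c n)⁻¹ := by positivity
      have hs0 : (0:ℝ) ≤ Real.sqrt (x n) := Real.sqrt_nonneg _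
      calc x n ^ γ ≤ 2 * ((c n)⁻¹ * Real.sqrt (x n) *
            (Real.sqrt (2 * Real.log (Real.exp 1 / x n)) + K)) := hn
        _ ≤ 2 * ((c n)⁻¹ * Real.sqrt (x n) * (A * Real.sqrt (Real.log (c n)))) := by
            apply mul_le_mul_of_nonneg_left _ (by norm_num)
            exact mul_le_mul_of_nonneg_left hbr
              (mul_nonneg (inv_nonneg.mpr (hcpos n).le) (Real.sqrt_nonneg _))
        _ = x n ^ ((1:ℝ)/2) * (2 * A * Real.sqrt (Real.log (c n)) * (c n)⁻¹) := by
            rw [← hsq]; ring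
    have hxsplit : x n ^ γ = x n ^ ((1:ℝ)/2) * x n ^ (β/2) := by
      rw [← Real.rpow_add hxpos]
      congr 1
      rw [hβ_def]; ring
    have hhalfpos : (0:ℝ) < x n ^ ((1:ℝ)/2) := Real.rpow_pos_of_pos hxpos _
    have hmain : x n ^ (β/2) ≤ 2 * A * Real.sqrt (Real.log (c n)) * (c n)⁻¹ := by
      rw [hxsplit] at hstep
      exact le_of_mul_le_mul_left hstep hhalfpos
    have hY0 : (0:ℝ) ≤ 2 * A * Real.sqrt (Real.log (c n)) * (c n)⁻¹ :=
      mul_nonneg (by positivity) (inv_nonneg.mpr (hcpos n).le)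
    have hfinal : x n ≤ (2 * A) ^ (2/β) * (Real.log (c n) ^ (1/β) * c n ^ (-(2/β))) := by
      have h1 : (x n ^ (β/2)) ^ (2/β) ≤
          (2 * A * Real.sqrt (Real.log (c n)) * (c n)⁻¹) ^ (2/β) :=
        Real.rpow_le_rpow (Real.rpow_nonneg (le_of_lt hxpos) _) hmain (by positivity)

      have h2 : (x n ^ (β/2)) ^ (2/β) = x n := by
        rw [← Real.rpow_mul (le_of_lt hxpos)]
        rw [show β/2 * (2/β) = 1 by field_simp]
        exact Real.rpow_one _
      have h4 : Real.sqrt (Real.log (c n)) ^ ((2:ℝ)/β) = Real.log (c n) ^ (1/β) := by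
        rw [Real.sqrt_eq_rpow, ← Real.rpow_mul (le_of_lt hlogc0)]
        congr 1
        field_simp
      have h5 : ((c n)⁻¹) ^ ((2:ℝ)/β) = c n ^ (-(2/β)) := by
        rw [Real.inv_rpow (hcpos n).le, ← Real.rpow_neg (hcpos n).le]
      have h3 : (2 * A * Real.sqrt (Real.log (c n)) * (c n)⁻¹) ^ (2/β)
          = (2 * A) ^ (2/β) * (Real.log (c n) ^ (1/β) * c n ^ (-(2/β))) := by
        rw [Real.mul_rpow (by positivity) (inv_nonneg.mpr (hcpos n).le),
            Real.mul_rpow (by positivity) (Real.sqrt_nonneg _), h4, h5]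
        ring
      rw [h2, h3] at h1
      exact h1
    calc x n ≤ (2 * A) ^ (2/β) * (Real.log (c n) ^ (1/β) * c n ^ (-(2/β))) := hfinal
      _ ≤ (1 + (2 * A) ^ (2/β)) * (Real.log (c n) ^ (1/β) * c n ^ (-(2/β))) := by
          linarith [hg0]
end
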